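/- arXiv:1607.06996 — 4 statements merged into one kernel-verified Lean document; each statement's English description precedes it below -/
import Mathlib

section
/- Second KKT condition (KKT-2): if w* minimizes P(·; α, β) over ℝ^p and θ* minimizes D(·; α, β) over the box [0,1]^n, then for every i ∈ {1, …, n}: [θ*]_i = 0 whenever 1 − ⟨x̄ᵢ, w*⟩ < 0; [θ*]_i = 1 whenever 1 − ⟨x̄ᵢ, w*⟩ > γ; and [θ*]_i = (1/γ)·(1 − ⟨x̄ᵢ, w*⟩) whenever 0 ≤ 1 − ⟨x̄ᵢ, w*⟩ ≤ γ. -/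
open Finset

/-- The smoothed hinge loss. -/
noncomputable def ell (γ t : ℝ) : ℝ :=
  if t < 0 then 0 else if t ≤ γ then t ^ 2 / (2 * γ) else t - γ / 2

/-- Componentwise soft-thresholding operator. -/
noncomputable def softThresh (β u : ℝ) : ℝ :=
  Real.sign u * max (|u| - β) 0

/-- Primal objective P(w; α, β). -/
noncomputable def Pobj {n p : ℕ} (xb : Fin n → Fin p → ℝ) (γ α β : ℝ) (w : Fin p → ℝ) : ℝ :=
  (1 / (n : ℝ)) * ∑ i, ell γ (1 - ∑ j, xb i j * w j)
    + (α / 2) * ∑ j, w j ^ 2 + β * ∑ j, |w j|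

/-- Dual objective D(θ; α, β). -/
noncomputable def Dobj {n p : ℕ} (xb : Fin n → Fin p → ℝ) (γ α β : ℝ) (θ : Fin n → ℝ) : ℝ :=
  (1 / (2 * α)) * ∑ j, softThresh β ((1 / (n : ℝ)) * ∑ i, θ i * xb i j) ^ 2
    + (γ / (2 * (n : ℝ))) * ∑ i, θ i ^ 2 - (1 / (n : ℝ)) * ∑ i, θ i

noncomputable def thetahat (γ t : ℝ) : ℝ :=
  if t < 0 then 0 else if t ≤ γ then t / γ else 1

noncomputable def gapL (γ t s : ℝ) : ℝ := ell γ t + γ * s ^ 2 / 2 - s * t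

lemma thetahat_mem (γ t : ℝ) (hγ : 0 < γ) : 0 ≤ thetahat γ t ∧ thetahat γ t ≤ 1 := by
  unfold thetahat
  split_ifs with h1 h2
  · norm_num
  · constructor
    · exact div_nonneg (by linarith [not_lt.mp h1]) hγ.le
    · rw [div_le_one hγ]; exact h2
  · norm_num

lemma gapL_nonneg {γ t s : ℝ} (hγ : 0 < γ) (hs0 : 0 ≤ s) (hs1 : s ≤ 1) :
    0 ≤ gapL γ t s := by
  unfold gapL ell
  split_ifs with h1 h2
  · nlinarith
  · have ht : t = γ * (t / γ) := by field_simp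
    have h2γ : t ^ 2 / (2 * γ) = γ * (t / γ) ^ 2 / 2 := by field_simp
    rw [h2γ]
    nlinarith [sq_nonneg (t / γ - s)]
  · nlinarith [mul_nonneg (by linarith : (0:ℝ) ≤ 1 - s) (by nlinarith : (0:ℝ) ≤ t - γ * (1 + s) / 2)]

lemma gapL_eq_zero {γ t s : ℝ} (hγ : 0 < γ) (hs0 : 0 ≤ s) (hs1 : s ≤ 1)
    (h : gapL γ t s = 0) :
    (t < 0 → s = 0) ∧ (t > γ → s = 1) ∧ (0 ≤ t → t ≤ γ → s = t / γ) := by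
  unfold gapL ell at h
  refine ⟨fun h1 => ?_, fun h2 => ?_, fun h3 h4 => ?_⟩
  · rw [if_pos h1] at h
    nlinarith
  · rw [if_neg (by linarith), if_neg (by linarith)] at h
    have hfact : (1 - s) * (t - γ * (1 + s) / 2) = 0 := by linear_combination h
    rcases mul_eq_zero.mp hfact with h5 | h5
    · linarith
    · nlinarith
  · rw [if_neg (by linarith), if_pos h4] at h
    have ht : t = γ * (t / γ) := by field_simp
    have h2γ : t ^ 2 / (2 * γ) = γ * (t / γ) ^ 2 / 2 := by field_simp
    rw [h2γ] at h
    have key : γ / 2 * (t / γ - s) ^ 2 = 0 := by linear_combination h + s * ht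
    have h5 : (t / γ - s) ^ 2 = 0 := by
      rcases mul_eq_zero.mp key with h6 | h6
      · exfalso; linarith
      · exact h6
    have h6 : t / γ - s = 0 := by
      exact pow_eq_zero_iff (two_ne_zero) |>.mp h5
    linarith

lemma gapL_thetahat {γ t : ℝ} (hγ : 0 < γ) : gapL γ t (thetahat γ t) = 0 := by
  unfold gapL ell thetahat
  split_ifs with h1 h2
  · ring
  · field_simp; ring
  · ring

lemma thetahat_lip {γ t t' : ℝ} (hγ : 0 < γ) :
    γ * ((thetahat γ t' - thetahat γ t) * (t' - t)) ≤ (t' - t) ^ 2 := by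
  have h1 : γ * (t / γ) = t := by field_simp
  have h2 : γ * (t' / γ) = t' := by field_simp
  unfold thetahat
  split_ifs with a b c d e f g <;> nlinarith [sq_nonneg (t' - t)]

lemma ell_smooth {γ t t' : ℝ} (hγ : 0 < γ) :
    ell γ t' ≤ ell γ t + thetahat γ t * (t' - t) + (t' - t) ^ 2 / γ := by
  have e1 := gapL_thetahat (t := t') hγ
  have e2 := gapL_nonneg (t := t) (s := thetahat γ t') hγ
    (thetahat_mem γ t' hγ).1 (thetahat_mem γ t' hγ).2
  have e3 := thetahat_lip (t := t) (t' := t') hγ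
  have e4 : (thetahat γ t' - thetahat γ t) * (t' - t) ≤ (t' - t) ^ 2 / γ := by
    rw [le_div_iff₀ hγ]; linarith [e3]
  unfold gapL at e1 e2
  nlinarith [e4]

lemma softThresh_sq {β u : ℝ} (hβ : 0 ≤ β) :
    softThresh β u ^ 2 = max (|u| - β) 0 ^ 2 := by
  unfold softThresh
  rcases lt_trichotomy u 0 with h | h | h
  · rw [Real.sign_of_neg h]; ring
  · subst h
    rw [abs_zero, zero_sub, max_eq_right (by linarith : -β ≤ (0:ℝ))]
    simp
  · rw [Real.sign_of_pos h]; ring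

lemma coord_fenchel {α β v w : ℝ} (hα : 0 < α) (hβ : 0 ≤ β) :
    v * w ≤ α / 2 * w ^ 2 + β * |w| + softThresh β v ^ 2 / (2 * α) := by
  rw [softThresh_sq hβ]
  set m := max (|v| - β) 0 with hm
  have hm0 : 0 ≤ m := le_max_right _ _
  have hmv : |v| ≤ m + β := by
    rcases le_max_iff.mpr (Or.inr (le_refl (0:ℝ))) with _
    have := le_max_left (|v| - β) 0
    linarith
  have hvw : v * w ≤ |v| * |w| := by
    calc v * w ≤ |v * w| := le_abs_self _
    _ = |v| * |w| := abs_mul v w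
  have hAM : m * |w| ≤ α / 2 * w ^ 2 + m ^ 2 / (2 * α) := by
    rw [← sub_nonneg]
    rw [← sq_abs w]
    have hx : α / 2 * |w| ^ 2 + m ^ 2 / (2 * α) - m * |w| = (α * |w| - m) ^ 2 / (2 * α) := by
      field_simp; ring_nf
    rw [hx]; positivity
  nlinarith [abs_nonneg w, abs_nonneg v, hAM]

lemma coord_eq {α β v w : ℝ} (hα : 0 < α) (hβ : 0 ≤ β) (h : α * w = softThresh β v) :
    v * w = α / 2 * w ^ 2 + β * |w| + softThresh β v ^ 2 / (2 * α) := by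
  have hw : w = softThresh β v / α := by field_simp; linarith [h]
  rcases le_or_gt (|v|) β with hc | hc
  · have hs : softThresh β v = 0 := by
      unfold softThresh
      rw [max_eq_right (by linarith)]; ring
    rw [hs] at hw
    simp at hw
    rw [hw, hs]
    simp
  · rcases lt_trichotomy v 0 with h1 | h1 | h1
    · have hs : softThresh β v = v + β := by
        unfold softThresh
        rw [Real.sign_of_neg h1, max_eq_left (by rw [abs_of_neg h1] at hc ⊢; linarith), abs_of_neg h1]
        ring
      have hw' : w = (v + β) / α := by rw [hw, hs]
      have hwneg : w < 0 := by
        rw [hw']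
        apply div_neg_of_neg_of_pos _ hα
        rw [abs_of_neg h1] at hc; linarith
      rw [abs_of_neg hwneg, hs, hw']
      field_simp
      ring
    · simp [h1, abs_zero] at hc; linarith
    · have hs : softThresh β v = v - β := by
        unfold softThresh
        rw [Real.sign_of_pos h1, max_eq_left (by rw [abs_of_pos h1] at hc ⊢; linarith), abs_of_pos h1]
        ring
      have hw' : w = (v - β) / α := by rw [hw, hs]
      have hwpos : 0 < w := by
        rw [hw']
        apply div_pos _ hα
        rw [abs_of_pos h1] at hc; linarith
      rw [abs_of_pos hwpos, hs, hw']
      field_simp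
      ring

lemma eps_key {A B ε₀ : ℝ} (hε₀ : 0 < ε₀)
    (h : ∀ ε : ℝ, 0 < ε → ε < ε₀ → 0 ≤ A * ε + B * ε ^ 2) : 0 ≤ A := by
  by_contra hA
  push_neg at hA
  rcases le_or_gt B 0 with hB | hB
  · have := h (ε₀ / 2) (by linarith) (by linarith)
    nlinarith
  · set ε := min (ε₀ / 2) (-A / (2 * B)) with hε
    have hεpos : 0 < ε := lt_min (by linarith) (div_pos (by linarith) (by positivity))
    have h1 := h ε hεpos (lt_of_le_of_lt (min_le_left _ _) (by linarith))
    have h2 : ε ≤ -A / (2 * B) := min_le_right _ _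
    rw [le_div_iff₀ (by positivity : (0:ℝ) < 2 * B)] at h2
    have h4 : B * ε ^ 2 ≤ (-A / 2) * ε := by nlinarith
    have h5 : A / 2 * ε < 0 := mul_neg_of_neg_of_pos (by linarith) hεpos
    nlinarith

lemma sum_update {p : ℕ} (g : Fin p → ℝ → ℝ) (w : Fin p → ℝ) (j : Fin p) (s : ℝ) :
    ∑ k, g k (Function.update w j s k) = ∑ k, g k (w k) + (g j s - g j (w j)) := by
  have hcong : ∑ k ∈ Finset.univ.erase j, g k (Function.update w j s k)
      = ∑ k ∈ Finset.univ.erase j, g k (w k) :=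
    Finset.sum_congr rfl (fun k hk => by
      rw [Function.update_of_ne (Finset.ne_of_mem_erase hk)])
  rw [← Finset.sum_erase_add Finset.univ _ (Finset.mem_univ j),
    ← Finset.sum_erase_add Finset.univ (fun k => g k (w k)) (Finset.mem_univ j)]
  rw [hcong, Function.update_self]
  ring

lemma stationarity {n p : ℕ} (hn : 0 < n) (xb : Fin n → Fin p → ℝ) (γ : ℝ) (hγ0 : 0 < γ)
    (α β : ℝ) (hα : 0 < α) (hβ : 0 < β) (wstar : Fin p → ℝ)
    (hw : ∀ w, Pobj xb γ α β wstar ≤ Pobj xb γ α β w) (j : Fin p) :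
    α * wstar j =
      softThresh β ((1 / (n : ℝ)) * ∑ i, thetahat γ (1 - ∑ k, xb i k * wstar k) * xb i j) := by
  have hn' : (0:ℝ) < (n:ℝ) := by exact_mod_cast hn
  set t : Fin n → ℝ := fun i => 1 - ∑ k, xb i k * wstar k with ht
  set th : Fin n → ℝ := fun i => thetahat γ (t i) with hth
  set vh : ℝ := (1 / (n : ℝ)) * ∑ i, th i * xb i j with hvh
  set s₀ : ℝ := wstar j with hs₀
  set G : ℝ := α * s₀ - vh with hG
  set K : ℝ := (1 / (n : ℝ)) * ∑ i, (xb i j) ^ 2 / γ + α / 2 with hK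
  clear_value t th vh s₀ G K
  have key : ∀ s : ℝ, 0 ≤ G * (s - s₀) + K * (s - s₀) ^ 2 + β * (|s| - |s₀|) := by
    intro s
    have hPle := hw (Function.update wstar j s)
    have hsuma : ∀ i : Fin n, (1:ℝ) - ∑ k, xb i k * Function.update wstar j s k
        = t i - xb i j * (s - s₀) := by
      intro i
      rw [sum_update (fun k x => xb i k * x) wstar j s]
      simp only [ht, hs₀]
      ring
    have hb : ∑ k, (Function.update wstar j s k) ^ 2 = ∑ k, wstar k ^ 2 + (s ^ 2 - s₀ ^ 2) := by
      rw [hs₀]; exact sum_update (fun _ x => x ^ 2) wstar j s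
    have hc : ∑ k, |Function.update wstar j s k| = ∑ k, |wstar k| + (|s| - |s₀|) := by
      rw [hs₀]; exact sum_update (fun _ x => |x|) wstar j s
    have hell : ∀ i : Fin n, ell γ (t i - xb i j * (s - s₀))
        ≤ ell γ (t i) + th i * (-(xb i j * (s - s₀))) + (xb i j * (s - s₀)) ^ 2 / γ := by
      intro i
      have h := ell_smooth (γ := γ) (t := t i) (t' := t i - xb i j * (s - s₀)) hγ0
      have h2 : t i - xb i j * (s - s₀) - t i = -(xb i j * (s - s₀)) := by ring
      rw [h2, neg_sq] at h
      simp only [hth]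
      exact h
    have hsle : ∑ i, ell γ (t i - xb i j * (s - s₀))
        ≤ ∑ i, (ell γ (t i) + th i * (-(xb i j * (s - s₀))) + (xb i j * (s - s₀)) ^ 2 / γ) :=
      Finset.sum_le_sum (fun i _ => hell i)
    have hre : ∑ i, (ell γ (t i) + th i * (-(xb i j * (s - s₀))) + (xb i j * (s - s₀)) ^ 2 / γ)
        = ∑ i, ell γ (t i) + (∑ i, th i * xb i j) * (-(s - s₀))
          + (∑ i, (xb i j) ^ 2 / γ) * (s - s₀) ^ 2 := by
      rw [Finset.sum_add_distrib, Finset.sum_add_distrib, Finset.sum_mul, Finset.sum_mul]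
      congr 1
      · congr 1
        apply Finset.sum_congr rfl; intro i _; ring
      · apply Finset.sum_congr rfl; intro i _; ring
    have h2 : (1 / (n:ℝ)) * ∑ i, ell γ (t i - xb i j * (s - s₀))
        ≤ (1 / (n:ℝ)) * (∑ i, ell γ (t i) + (∑ i, th i * xb i j) * (-(s - s₀))
          + (∑ i, (xb i j) ^ 2 / γ) * (s - s₀) ^ 2) :=
      mul_le_mul_of_nonneg_left (hsle.trans_eq hre) (by positivity)
    unfold Pobj at hPle
    rw [hb, hc] at hPle
    have hcong2 : ∑ i, ell γ (1 - ∑ k, xb i k * Function.update wstar j s k)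
        = ∑ i, ell γ (t i - xb i j * (s - s₀)) :=
      Finset.sum_congr rfl (fun i _ => by rw [hsuma i])
    rw [hcong2] at hPle
    have h3 : (1 / (n:ℝ)) * (∑ i, ell γ (t i) + (∑ i, th i * xb i j) * (-(s - s₀))
          + (∑ i, (xb i j) ^ 2 / γ) * (s - s₀) ^ 2)
        + α / 2 * (∑ k, wstar k ^ 2 + (s ^ 2 - s₀ ^ 2))
        + β * (∑ k, |wstar k| + (|s| - |s₀|))
        = ((1 / (n:ℝ)) * ∑ i, ell γ (t i) + α / 2 * ∑ k, wstar k ^ 2 + β * ∑ k, |wstar k|)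
          + (G * (s - s₀) + K * (s - s₀) ^ 2 + β * (|s| - |s₀|)) := by
      simp only [hG, hK, hvh, hs₀]
      ring
    have hP0 : (1 / (n:ℝ)) * ∑ i, ell γ (1 - ∑ k, xb i k * wstar k)
        = (1 / (n:ℝ)) * ∑ i, ell γ (t i) := by simp only [ht]
    rw [hP0] at hPle
    have step : (1 / (n:ℝ)) * ∑ i, ell γ (t i) + α / 2 * ∑ k, wstar k ^ 2 + β * ∑ k, |wstar k|
        ≤ (1 / (n:ℝ)) * (∑ i, ell γ (t i) + (∑ i, th i * xb i j) * (-(s - s₀))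
            + (∑ i, (xb i j) ^ 2 / γ) * (s - s₀) ^ 2)
          + α / 2 * (∑ k, wstar k ^ 2 + (s ^ 2 - s₀ ^ 2))
          + β * (∑ k, |wstar k| + (|s| - |s₀|)) := by linarith [hPle, h2]
    rw [h3] at step
    exact (le_add_iff_nonneg_right _).mp step
  rcases lt_trichotomy s₀ 0 with hs | hs | hs
  · -- s₀ < 0 : G = β, vh = α s₀ - β < -β
    have hplus : 0 ≤ (G - β) := by
      apply eps_key (B := K) (ε₀ := -s₀) (by linarith)
      intro ε hε1 hε2
      have hk := key (s₀ + ε)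
      have habs : |s₀ + ε| - |s₀| = -ε := by
        rw [abs_of_neg (by linarith), abs_of_neg hs]; ring
      rw [habs] at hk
      linarith [hk]
    have hminus : 0 ≤ -(G - β) := by
      apply eps_key (B := K) (ε₀ := 1) one_pos
      intro ε hε1 hε2
      have hk := key (s₀ - ε)
      have habs : |s₀ - ε| - |s₀| = ε := by
        rw [abs_of_neg (by linarith), abs_of_neg hs]; ring
      rw [habs] at hk
      linarith [hk]
    have hv : vh = α * s₀ - β := by
      have : G = β := by linarith
      simp only [hG] at this; linarith
    have hvn : vh < 0 := by linarith [mul_neg_of_pos_of_neg hα hs]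
    unfold softThresh
    rw [Real.sign_of_neg hvn, abs_of_neg hvn,
      max_eq_left (by linarith [mul_neg_of_pos_of_neg hα hs] : (0:ℝ) ≤ -vh - β)]
    linarith [hv]
  · -- s₀ = 0 : |vh| ≤ β
    have hplus : 0 ≤ G + β := by
      apply eps_key (B := K) (ε₀ := 1) one_pos
      intro ε hε1 hε2
      have hk := key (s₀ + ε)
      have habs : |s₀ + ε| - |s₀| = ε := by
        rw [hs, zero_add, abs_of_pos hε1, abs_zero]; ring
      rw [habs] at hk
      linarith [hk]
    have hminus : 0 ≤ -G + β := by
      apply eps_key (B := K) (ε₀ := 1) one_pos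
      intro ε hε1 hε2
      have hk := key (s₀ - ε)
      have habs : |s₀ - ε| - |s₀| = ε := by
        rw [hs, zero_sub, abs_neg, abs_of_pos hε1, abs_zero]; ring
      rw [habs] at hk
      linarith [hk]
    have hGv : G = -vh := by rw [hG, hs]; ring
    have habsv : |vh| ≤ β := abs_le.mpr ⟨by linarith, by linarith⟩
    unfold softThresh
    rw [max_eq_right (by linarith : |vh| - β ≤ 0)]
    rw [hs, mul_zero, mul_zero]
  · -- s₀ > 0 : G = -β, vh = α s₀ + β > β
    have hplus : 0 ≤ (G + β) := by
      apply eps_key (B := K) (ε₀ := 1) one_pos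
      intro ε hε1 hε2
      have hk := key (s₀ + ε)
      have habs : |s₀ + ε| - |s₀| = ε := by
        rw [abs_of_pos (by linarith), abs_of_pos hs]; ring
      rw [habs] at hk
      linarith [hk]
    have hminus : 0 ≤ -(G + β) := by
      apply eps_key (B := K) (ε₀ := s₀) hs
      intro ε hε1 hε2
      have hk := key (s₀ - ε)
      have habs : |s₀ - ε| - |s₀| = -ε := by
        rw [abs_of_pos (by linarith), abs_of_pos hs]; ring
      rw [habs] at hk
      linarith [hk]
    have hv : vh = α * s₀ + β := by
      have : G = -β := by linarith
      simp only [hG] at this; linarith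
    have hvp : 0 < vh := by linarith [mul_pos hα hs]
    unfold softThresh
    rw [Real.sign_of_pos hvp, abs_of_pos hvp,
      max_eq_left (by linarith [mul_pos hα hs] : (0:ℝ) ≤ vh - β)]
    linarith [hv]

lemma decomp {n p : ℕ} (xb : Fin n → Fin p → ℝ) (γ α β : ℝ) (w : Fin p → ℝ)
    (θ : Fin n → ℝ) :
    Pobj xb γ α β w + Dobj xb γ α β θ
      = (1 / (n : ℝ)) * ∑ i, gapL γ (1 - ∑ j, xb i j * w j) (θ i)
        + ∑ j, (α / 2 * w j ^ 2 + β * |w j|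
            + softThresh β ((1 / (n : ℝ)) * ∑ i, θ i * xb i j) ^ 2 / (2 * α)
            - ((1 / (n : ℝ)) * ∑ i, θ i * xb i j) * w j) := by
  unfold Pobj Dobj gapL
  have hswap : ∑ i, θ i * ∑ j, xb i j * w j = ∑ j, (∑ i, θ i * xb i j) * w j := by
    simp only [Finset.mul_sum, Finset.sum_mul]
    rw [Finset.sum_comm]
    apply Finset.sum_congr rfl
    intro i _
    apply Finset.sum_congr rfl
    intro j _
    ring
  have h1 : ∑ i, (ell γ (1 - ∑ j, xb i j * w j) + γ * θ i ^ 2 / 2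
        - θ i * (1 - ∑ j, xb i j * w j))
      = ∑ i, ell γ (1 - ∑ j, xb i j * w j) + (γ / 2) * ∑ i, θ i ^ 2
        - ∑ i, θ i + ∑ i, θ i * ∑ j, xb i j * w j := by
    rw [Finset.mul_sum, ← Finset.sum_add_distrib, ← Finset.sum_sub_distrib,
      ← Finset.sum_add_distrib]
    apply Finset.sum_congr rfl; intro i _; ring
  have h2 : ∑ j, (α / 2 * w j ^ 2 + β * |w j|
        + softThresh β ((1 / (n : ℝ)) * ∑ i, θ i * xb i j) ^ 2 / (2 * α)
        - ((1 / (n : ℝ)) * ∑ i, θ i * xb i j) * w j)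
      = (α / 2) * ∑ j, w j ^ 2 + β * ∑ j, |w j|
        + (1 / (2 * α)) * ∑ j, softThresh β ((1 / (n : ℝ)) * ∑ i, θ i * xb i j) ^ 2
        - (1 / (n : ℝ)) * ∑ j, (∑ i, θ i * xb i j) * w j := by
    rw [Finset.mul_sum, Finset.mul_sum, Finset.mul_sum, Finset.mul_sum,
      ← Finset.sum_add_distrib, ← Finset.sum_add_distrib, ← Finset.sum_sub_distrib]
    apply Finset.sum_congr rfl; intro j _; ring
  rw [h1, h2, ← hswap]
  ring

theorem kkt_two {n p : ℕ} (hn : 0 < n) (hp : 0 < p)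
    (xb : Fin n → Fin p → ℝ) (γ : ℝ) (hγ0 : 0 < γ) (hγ1 : γ < 1)
    (α β : ℝ) (hα : 0 < α) (hβ : 0 < β)
    (wstar : Fin p → ℝ) (θstar : Fin n → ℝ)
    (hw : ∀ w, Pobj xb γ α β wstar ≤ Pobj xb γ α β w)
    (hθbox : ∀ i, 0 ≤ θstar i ∧ θstar i ≤ 1)
    (hθ : ∀ θ : Fin n → ℝ, (∀ i, 0 ≤ θ i ∧ θ i ≤ 1) →
      Dobj xb γ α β θstar ≤ Dobj xb γ α β θ) :
    ∀ i, (1 - ∑ j, xb i j * wstar j < 0 → θstar i = 0) ∧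
      (1 - ∑ j, xb i j * wstar j > γ → θstar i = 1) ∧
      (0 ≤ 1 - ∑ j, xb i j * wstar j → 1 - ∑ j, xb i j * wstar j ≤ γ →
        θstar i = (1 / γ) * (1 - ∑ j, xb i j * wstar j)) := by
  have hn' : (0:ℝ) < (n:ℝ) := by exact_mod_cast hn
  set θh : Fin n → ℝ := fun i => thetahat γ (1 - ∑ j, xb i j * wstar j) with hθh
  have hzero : Pobj xb γ α β wstar + Dobj xb γ α β θh = 0 := by
    rw [decomp]
    have hg : ∑ i, gapL γ (1 - ∑ j, xb i j * wstar j) (θh i) = 0 :=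
      Finset.sum_eq_zero (fun i _ => by
        simp only [hθh]; exact gapL_thetahat hγ0)
    have hc : ∑ j, (α / 2 * wstar j ^ 2 + β * |wstar j|
        + softThresh β ((1 / (n : ℝ)) * ∑ i, θh i * xb i j) ^ 2 / (2 * α)
        - ((1 / (n : ℝ)) * ∑ i, θh i * xb i j) * wstar j) = 0 :=
      Finset.sum_eq_zero (fun j _ => by
        have hst := stationarity hn xb γ hγ0 α β hα hβ wstar hw j
        have := coord_eq hα hβ.le (v := (1 / (n : ℝ)) * ∑ i, θh i * xb i j)
          (w := wstar j) (by simpa only [hθh] using hst)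
        linarith [this])
    rw [hg, hc]
    ring
  have hDle : Dobj xb γ α β θstar ≤ Dobj xb γ α β θh :=
    hθ θh (fun i => thetahat_mem γ _ hγ0)
  have hdec := decomp xb γ α β wstar θstar
  have hGnn : ∀ i ∈ Finset.univ, 0 ≤ gapL γ (1 - ∑ j, xb i j * wstar j) (θstar i) :=
    fun i _ => gapL_nonneg hγ0 (hθbox i).1 (hθbox i).2
  have hCnn : (0:ℝ) ≤ ∑ j, (α / 2 * wstar j ^ 2 + β * |wstar j|
      + softThresh β ((1 / (n : ℝ)) * ∑ i, θstar i * xb i j) ^ 2 / (2 * α)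
      - ((1 / (n : ℝ)) * ∑ i, θstar i * xb i j) * wstar j) :=
    Finset.sum_nonneg (fun j _ => by
      have hcf := coord_fenchel (α := α) (β := β)
        (v := ((1 / (n : ℝ)) * ∑ i, θstar i * xb i j)) (w := (wstar j)) hα hβ.le
      linarith [hcf])
  have hsum0 : ∑ i, gapL γ (1 - ∑ j, xb i j * wstar j) (θstar i) = 0 := by
    have hle : (1 / (n : ℝ)) * ∑ i, gapL γ (1 - ∑ j, xb i j * wstar j) (θstar i) ≤ 0 := by
      linarith [hdec, hzero, hDle, hCnn]
    have hge : 0 ≤ ∑ i, gapL γ (1 - ∑ j, xb i j * wstar j) (θstar i) :=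
      Finset.sum_nonneg hGnn
    have h1n : (0:ℝ) < 1 / (n : ℝ) := by positivity
    nlinarith [hle, hge, h1n]
  have hterm := (Finset.sum_eq_zero_iff_of_nonneg hGnn).mp hsum0
  intro i
  have h0 := hterm i (Finset.mem_univ i)
  obtain ⟨ha, hb, hc⟩ := gapL_eq_zero hγ0 (hθbox i).1 (hθbox i).2 h0
  refine ⟨ha, hb, fun h1 h2 => ?_⟩
  rw [hc h1 h2]
  ring
end

section
/- Closed form for large β (Theorem on β_max): let β_max = max_{j ∈ {1,…,p}} |(1/n)·Σ_{i=1}^n [x̄ᵢ]_j| (the ℓ∞-norm of (1/n)·X̄1). Then for every α > 0 and every β ≥ β_max, the zero vector 0 ∈ ℝ^p minimizes P(·; α, β) over ℝ^p, and the all-ones vector 1 ∈ ℝ^n minimizes D(·; α, β) over the box [0,1]^n. -/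
open Finset

lemma ell_ge {γ : ℝ} (hγ : 0 < γ) (t : ℝ) : t - γ / 2 ≤ ell γ t := by
  unfold ell
  split_ifs with h1 h2
  · nlinarith
  · rw [le_div_iff₀ (by positivity : (0:ℝ) < 2 * γ)]
    nlinarith [sq_nonneg (t - γ)]
  · linarith

theorem beta_max_closed_form {n p : ℕ} (hn : 0 < n) (hp : 0 < p)
    (xb : Fin n → Fin p → ℝ) (γ : ℝ) (hγ0 : 0 < γ) (hγ1 : γ < 1)
    (α β : ℝ) (hα : 0 < α)
    (hβmax : Finset.univ.sup' ⟨(⟨0, hp⟩ : Fin p), Finset.mem_univ _⟩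
      (fun j => |(1 / (n : ℝ)) * ∑ i, xb i j|) ≤ β) :
    (∀ w, Pobj xb γ α β (fun _ => 0) ≤ Pobj xb γ α β w) ∧
    (∀ θ : Fin n → ℝ, (∀ i, 0 ≤ θ i ∧ θ i ≤ 1) →
      Dobj xb γ α β (fun _ => 1) ≤ Dobj xb γ α β θ) := by
  have hn' : (0:ℝ) < n := by exact_mod_cast hn
  have hβj : ∀ j, |(1 / (n : ℝ)) * ∑ i, xb i j| ≤ β := fun j =>
    le_trans (Finset.le_sup' (fun j => |(1 / (n : ℝ)) * ∑ i, xb i j|) (mem_univ j)) hβmax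
  have hβ0 : 0 ≤ β := le_trans (abs_nonneg _) (hβj ⟨0, hp⟩)
  have hell1 : ell γ 1 = 1 - γ / 2 := by
    unfold ell
    rw [if_neg (by norm_num), if_neg (by linarith)]
  constructor
  · -- primal part
    intro w
    have hP0 : Pobj xb γ α β (fun _ => 0) = 1 - γ / 2 := by
      simp only [Pobj, mul_zero, Finset.sum_const_zero, sub_zero, hell1,
        Finset.sum_const, Finset.card_univ, Fintype.card_fin, nsmul_eq_mul,
        abs_zero, ne_eq, zero_pow]
      field_simp
      ring
    rw [hP0]
    set S : Fin n → ℝ := fun i => ∑ j, xb i j * w j with hS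
    have hA : ∑ i, (1 - S i - γ / 2) ≤ ∑ i, ell γ (1 - S i) :=
      Finset.sum_le_sum fun i _ => by
        have := ell_ge hγ0 (1 - S i)
        linarith
    have h1 : (1 / (n:ℝ)) * ∑ i, (1 - S i - γ / 2) ≤ (1 / (n:ℝ)) * ∑ i, ell γ (1 - S i) :=
      mul_le_mul_of_nonneg_left hA (by positivity)
    have h2 : (1 / (n:ℝ)) * ∑ i, (1 - S i - γ / 2)
        = 1 - γ / 2 - (1 / (n:ℝ)) * ∑ i, S i := by
      rw [show (fun i => 1 - S i - γ / 2) = (fun i => (1 - γ/2) - S i) by funext i; ring]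
      rw [Finset.sum_sub_distrib, Finset.sum_const, Finset.card_univ, Fintype.card_fin,
        nsmul_eq_mul]
      field_simp
    have hswap : ∑ i, S i = ∑ j, (∑ i, xb i j) * w j := by
      rw [hS, Finset.sum_comm]
      exact Finset.sum_congr rfl fun j _ => (Finset.sum_mul _ _ _).symm
    have h3 : (1 / (n:ℝ)) * ∑ i, S i ≤ β * ∑ j, |w j| := by
      rw [hswap, Finset.mul_sum, Finset.mul_sum]
      refine Finset.sum_le_sum fun j _ => ?_
      calc (1 / (n:ℝ)) * ((∑ i, xb i j) * w j)
          = ((1 / (n:ℝ)) * ∑ i, xb i j) * w j := by ring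
        _ ≤ |((1 / (n:ℝ)) * ∑ i, xb i j) * w j| := le_abs_self _
        _ = |(1 / (n:ℝ)) * ∑ i, xb i j| * |w j| := abs_mul _ _
        _ ≤ β * |w j| := mul_le_mul_of_nonneg_right (hβj j) (abs_nonneg _)
    have h4 : (0:ℝ) ≤ (α / 2) * ∑ j, w j ^ 2 := by positivity
    unfold Pobj
    linarith
  · -- dual part
    intro θ hθ
    have hD1 : Dobj xb γ α β (fun _ => 1) = γ / 2 - 1 := by
      have hst : ∀ j, softThresh β ((1 / (n:ℝ)) * ∑ i, (1:ℝ) * xb i j) = 0 := by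
        intro j
        unfold softThresh
        have h := hβj j
        simp only [one_mul]
        rw [max_eq_right (by linarith), mul_zero]
      simp only [Dobj, hst, ne_eq, OfNat.ofNat_ne_zero, not_false_eq_true, zero_pow,
        Finset.sum_const_zero, mul_zero, one_pow, Finset.sum_const, Finset.card_univ,
        Fintype.card_fin, nsmul_eq_mul, mul_one, zero_add]
      field_simp
    rw [hD1]
    have hT1 : (0:ℝ) ≤ (1 / (2 * α)) * ∑ j,
        softThresh β ((1 / (n : ℝ)) * ∑ i, θ i * xb i j) ^ 2 := by positivity
    have hsum : (n:ℝ) * (γ / 2 - 1) ≤ (γ / 2) * ∑ i, θ i ^ 2 - ∑ i, θ i := by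
      calc (n:ℝ) * (γ / 2 - 1) = ∑ _i : Fin n, (γ / 2 - 1) := by
            rw [Finset.sum_const, Finset.card_univ, Fintype.card_fin, nsmul_eq_mul]
        _ ≤ ∑ i, ((γ / 2) * θ i ^ 2 - θ i) := by
            refine Finset.sum_le_sum fun i _ => ?_
            obtain ⟨h0, h1⟩ := hθ i
            nlinarith [mul_nonneg (sub_nonneg.2 h1)
              (show (0:ℝ) ≤ 2 - γ * (1 + θ i) by nlinarith)]
        _ = (γ / 2) * ∑ i, θ i ^ 2 - ∑ i, θ i := by
            rw [Finset.sum_sub_distrib, Finset.mul_sum]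
    have h3 : γ / 2 - 1 ≤ ((γ / 2) * ∑ i, θ i ^ 2 - ∑ i, θ i) / n :=
      (le_div_iff₀ hn').2 (by linarith)
    have h4 : (γ / (2 * (n:ℝ))) * ∑ i, θ i ^ 2 - (1 / (n:ℝ)) * ∑ i, θ i
        = ((γ / 2) * ∑ i, θ i ^ 2 - ∑ i, θ i) / n := by
      field_simp
    unfold Dobj
    linarith
end

section
/- Closed form for large α (Theorem on α_max): fix β > 0 and let α_max(β) = (1/(1−γ))·max_{i ∈ {1,…,n}} ⟨x̄ᵢ, S_β((1/n)·X̄1)⟩. Then for every α > 0 with α ≥ α_max(β), the vector w = (1/α)·S_β((1/n)·X̄1) minimizes P(·; α, β) over ℝ^p, and the all-ones vector 1 ∈ ℝ^n minimizes D(·; α, β) over the box [0,1]^n. -/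
open Finset

lemma ell_lb (γ θ t : ℝ) (hγ : 0 < γ) (h0 : 0 ≤ θ) (h1 : θ ≤ 1) :
    θ * t - γ * θ ^ 2 / 2 ≤ ell γ t := by
  unfold ell
  split_ifs with h h'
  · nlinarith [mul_nonneg h0 (le_of_lt (neg_pos.mpr h)), sq_nonneg θ]
  · rw [le_div_iff₀ (by linarith : (0:ℝ) < 2 * γ)]
    nlinarith [sq_nonneg (t - γ * θ)]
  · have ht : γ < t := lt_of_not_ge h'
    nlinarith [mul_nonneg (sub_nonneg.2 h1) (sub_nonneg.2 ht.le), sq_nonneg (1 - θ)]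

lemma softThresh_abs (β u : ℝ) (hβ : 0 ≤ β) : |softThresh β u| = max (|u| - β) 0 := by
  unfold softThresh
  have hmx : |max (|u| - β) 0| = max (|u| - β) 0 :=
    abs_of_nonneg (le_max_right (|u| - β) 0)
  rcases lt_trichotomy u 0 with h | h | h
  · rw [abs_mul, Real.sign_of_neg h, hmx]; norm_num
  · subst h
    rw [Real.sign_zero, zero_mul, abs_zero, zero_sub,
      max_eq_right (neg_nonpos.mpr hβ)]

  · rw [abs_mul, Real.sign_of_pos h, hmx]; norm_num

lemma scalar_ineq (α β v w : ℝ) (hα : 0 < α) (hβ : 0 < β) :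
    v * w ≤ α / 2 * w ^ 2 + β * |w| + softThresh β v ^ 2 / (2 * α) := by
  set m := max (|v| - β) 0 with hm
  have hm0 : 0 ≤ m := le_max_right _ _
  have hvm : |v| ≤ m + β := by
    rcases le_total (|v| - β) 0 with h | h
    · simp [hm, max_eq_right h]; linarith
    · simp [hm, max_eq_left h]
  have hs : softThresh β v ^ 2 = m ^ 2 := by
    rw [← sq_abs, softThresh_abs β v hβ.le]
  rw [hs]
  have h1 : v * w ≤ |v| * |w| := (le_abs_self _).trans (abs_mul v w).le
  have h2 : m * |w| ≤ α / 2 * w ^ 2 + m ^ 2 / (2 * α) := by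
    rw [← sub_nonneg]
    have key : α / 2 * w ^ 2 + m ^ 2 / (2 * α) - m * |w| = (α * |w| - m) ^ 2 / (2 * α) := by
      field_simp
      ring_nf
      rw [sq_abs]
      try ring
    rw [key]; positivity
  nlinarith [abs_nonneg w, abs_nonneg v, mul_le_mul_of_nonneg_right hvm (abs_nonneg w)]

lemma scalar_eq (β u : ℝ) (hβ : 0 ≤ β) :
    u * softThresh β u = softThresh β u ^ 2 + β * |softThresh β u| := by
  rcases le_or_gt (|u|) β with h | h
  · have : softThresh β u = 0 := by
      unfold softThresh; simp [max_eq_right (by linarith : |u| - β ≤ 0)]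
    simp [this]
  · have hu : u ≠ 0 := by intro h0; rw [h0, abs_zero] at h; linarith
    have hmax : max (|u| - β) 0 = |u| - β := max_eq_left (by linarith)
    have habs : |softThresh β u| = |u| - β := by rw [softThresh_abs β u hβ, hmax]
    have hsq : softThresh β u ^ 2 = (|u| - β) ^ 2 := by rw [← sq_abs, habs]
    have hus : u * softThresh β u = |u| * (|u| - β) := by
      unfold softThresh; rw [hmax, ← mul_assoc]
      congr 1
      rcases lt_or_gt_of_ne hu with h' | h'
      · rw [Real.sign_of_neg h', abs_of_neg h']; try ring
      · rw [Real.sign_of_pos h', abs_of_pos h']; try ring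
    rw [hus, hsq, habs]; ring

lemma ell_of_ge (γ t : ℝ) (hγ : 0 < γ) (ht : γ ≤ t) : ell γ t = t - γ / 2 := by
  unfold ell
  split_ifs with h h'
  · linarith
  · have : t = γ := le_antisymm h' ht
    subst this; field_simp; ring
  · rfl

lemma weak_duality {n p : ℕ} (hn : 0 < n) (xb : Fin n → Fin p → ℝ) (γ α β : ℝ)
    (hγ : 0 < γ) (hα : 0 < α) (hβ : 0 < β) (w : Fin p → ℝ) (θ : Fin n → ℝ)
    (hθ : ∀ i, 0 ≤ θ i ∧ θ i ≤ 1) :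
    0 ≤ Pobj xb γ α β w + Dobj xb γ α β θ := by
  have hn' : (0:ℝ) < n := Nat.cast_pos.mpr hn
  set v : Fin p → ℝ := fun j => (1 / (n : ℝ)) * ∑ i, θ i * xb i j with hv
  -- Fenchel bound on losses
  have h1 : ∑ i, (θ i * (1 - ∑ j, xb i j * w j) - γ * θ i ^ 2 / 2)
      ≤ ∑ i, ell γ (1 - ∑ j, xb i j * w j) :=
    Finset.sum_le_sum fun i _ => ell_lb γ (θ i) _ hγ (hθ i).1 (hθ i).2
  -- regularizer bound
  have h2 : ∑ j, v j * w j
      ≤ ∑ j, (α / 2 * w j ^ 2 + β * |w j| + softThresh β (v j) ^ 2 / (2 * α)) :=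
    Finset.sum_le_sum fun j _ => scalar_ineq α β (v j) (w j) hα hβ
  -- swap of sums
  have hswap : ∑ i, θ i * ∑ j, xb i j * w j = (n : ℝ) * ∑ j, v j * w j := by
    have e1 : ∀ j, (n : ℝ) * (v j * w j) = (∑ i, θ i * xb i j) * w j := by
      intro j; rw [hv]; field_simp
    rw [Finset.mul_sum, Finset.sum_congr rfl fun j _ => e1 j]
    simp_rw [Finset.sum_mul, Finset.mul_sum]
    rw [Finset.sum_comm]
    apply Finset.sum_congr rfl; intro i _
    apply Finset.sum_congr rfl; intro j _
    ring
  -- expand the lower bound sum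
  have e2 : ∑ i, (θ i * (1 - ∑ j, xb i j * w j) - γ * θ i ^ 2 / 2)
      = ∑ i, θ i - (n : ℝ) * ∑ j, v j * w j - (γ / 2) * ∑ i, θ i ^ 2 := by
    rw [Finset.sum_sub_distrib]
    rw [show ∑ i, θ i * (1 - ∑ j, xb i j * w j)
        = ∑ i, θ i - ∑ i, θ i * ∑ j, xb i j * w j by
      rw [← Finset.sum_sub_distrib]; apply Finset.sum_congr rfl; intro i _; ring]
    rw [hswap, Finset.mul_sum]
    rw [show ∑ i, γ * θ i ^ 2 / 2 = (γ / 2) * ∑ i, θ i ^ 2 by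
      rw [Finset.mul_sum]; apply Finset.sum_congr rfl; intro i _; ring]
  -- expand the RHS of h2
  have e3 : ∑ j, (α / 2 * w j ^ 2 + β * |w j| + softThresh β (v j) ^ 2 / (2 * α))
      = (α / 2) * ∑ j, w j ^ 2 + β * ∑ j, |w j|
        + (1 / (2 * α)) * ∑ j, softThresh β (v j) ^ 2 := by
    rw [Finset.sum_add_distrib, Finset.sum_add_distrib, Finset.mul_sum, Finset.mul_sum,
      Finset.mul_sum]
    congr 1
    apply Finset.sum_congr rfl; intro j _; ring
  rw [e2] at h1
  rw [e3] at h2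
  unfold Pobj Dobj
  have h1' : (1 / (n : ℝ)) * (∑ i, θ i - (n : ℝ) * ∑ j, v j * w j - (γ / 2) * ∑ i, θ i ^ 2)
      ≤ (1 / (n : ℝ)) * ∑ i, ell γ (1 - ∑ j, xb i j * w j) :=
    mul_le_mul_of_nonneg_left h1 (by positivity)
  have hc : (1 / (n : ℝ)) * ((n : ℝ) * ∑ j, v j * w j) = ∑ j, v j * w j := by
    field_simp
  have hγn : (1 / (n : ℝ)) * ((γ / 2) * ∑ i, θ i ^ 2)
      = (γ / (2 * (n : ℝ))) * ∑ i, θ i ^ 2 := by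
    ring
  rw [mul_sub, mul_sub, hc, hγn] at h1'
  linarith [h1', h2]

lemma strong_eq {n p : ℕ} (hn : 0 < n)
    (xb : Fin n → Fin p → ℝ) (γ : ℝ) (hγ0 : 0 < γ) (hγ1 : γ < 1)
    (α β : ℝ) (hα : 0 < α) (hβ : 0 < β)
    (hαmax : (1 / (1 - γ)) * Finset.univ.sup' ⟨(⟨0, hn⟩ : Fin n), Finset.mem_univ _⟩
      (fun i => ∑ j, xb i j * softThresh β ((1 / (n : ℝ)) * ∑ k, xb k j)) ≤ α) :
    Pobj xb γ α β (fun j => (1 / α) * softThresh β ((1 / (n : ℝ)) * ∑ k, xb k j))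
      + Dobj xb γ α β (fun _ => 1) = 0 := by
  have hn' : (0:ℝ) < n := Nat.cast_pos.mpr hn
  have h1γ : (0:ℝ) < 1 - γ := by linarith
  -- abbreviations (defs, not set, to avoid rewriting issues)
  have hsup : Finset.univ.sup' ⟨(⟨0, hn⟩ : Fin n), Finset.mem_univ _⟩
      (fun i => ∑ j, xb i j * softThresh β ((1 / (n : ℝ)) * ∑ k, xb k j)) ≤ (1 - γ) * α := by
    calc Finset.univ.sup' _ _
        = (1 - γ) * ((1 / (1 - γ)) * Finset.univ.sup' _ _) := by field_simp
      _ ≤ (1 - γ) * α := mul_le_mul_of_nonneg_left hαmax h1γ.le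
  have hci : ∀ i : Fin n,
      ∑ j, xb i j * softThresh β ((1 / (n : ℝ)) * ∑ k, xb k j) ≤ (1 - γ) * α :=
    fun i => le_trans
      (Finset.le_sup' (f := fun i => ∑ j, xb i j * softThresh β ((1 / (n : ℝ)) * ∑ k, xb k j))
        (Finset.mem_univ i)) hsup
  -- the loss terms are in the linear regime
  have hell : ∀ i : Fin n,
      ell γ (1 - ∑ j, xb i j * ((1 / α) * softThresh β ((1 / (n : ℝ)) * ∑ k, xb k j)))
        = 1 - ∑ j, xb i j * ((1 / α) * softThresh β ((1 / (n : ℝ)) * ∑ k, xb k j)) - γ / 2 := by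
    intro i
    apply ell_of_ge _ _ hγ0
    have e : ∑ j, xb i j * ((1 / α) * softThresh β ((1 / (n : ℝ)) * ∑ k, xb k j))
        = (1 / α) * ∑ j, xb i j * softThresh β ((1 / (n : ℝ)) * ∑ k, xb k j) := by
      rw [Finset.mul_sum]; apply Finset.sum_congr rfl; intro j _; ring
    rw [e]
    have h1 : (1 / α) * ∑ j, xb i j * softThresh β ((1 / (n : ℝ)) * ∑ k, xb k j)
        ≤ (1 / α) * ((1 - γ) * α) := mul_le_mul_of_nonneg_left (hci i) (by positivity)
    have h2 : (1 / α) * ((1 - γ) * α) = 1 - γ := by field_simp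
    linarith
  -- sum of losses
  have hsum_ell : ∑ i, ell γ (1 - ∑ j, xb i j * ((1 / α) * softThresh β ((1 / (n : ℝ)) * ∑ k, xb k j)))
      = (n : ℝ) * (1 - γ / 2)
        - (n : ℝ) * ((1 / α) * ∑ j, ((1 / (n : ℝ)) * ∑ k, xb k j)
            * softThresh β ((1 / (n : ℝ)) * ∑ k, xb k j)) := by
    rw [Finset.sum_congr rfl fun i _ => hell i]
    have hswap : ∑ i, ∑ j, xb i j * ((1 / α) * softThresh β ((1 / (n : ℝ)) * ∑ k, xb k j))
        = (n : ℝ) * ((1 / α) * ∑ j, ((1 / (n : ℝ)) * ∑ k, xb k j)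
            * softThresh β ((1 / (n : ℝ)) * ∑ k, xb k j)) := by
      rw [Finset.sum_comm, Finset.mul_sum, Finset.mul_sum]
      apply Finset.sum_congr rfl; intro j _
      rw [← Finset.sum_mul]
      field_simp
    have e1 : ∑ i : Fin n, (1 - ∑ j, xb i j * ((1 / α) * softThresh β ((1 / (n : ℝ)) * ∑ k, xb k j)) - γ / 2)
        = ∑ i : Fin n, (1 - γ / 2)
          - ∑ i, ∑ j, xb i j * ((1 / α) * softThresh β ((1 / (n : ℝ)) * ∑ k, xb k j)) := by
      rw [← Finset.sum_sub_distrib]; apply Finset.sum_congr rfl; intro i _; ring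
    rw [e1, hswap, Finset.sum_const, Finset.card_univ, Fintype.card_fin, nsmul_eq_mul]
  -- dual at the all-ones vector
  have hD : Dobj xb γ α β (fun _ => (1:ℝ))
      = (1 / (2 * α)) * ∑ j, softThresh β ((1 / (n : ℝ)) * ∑ k, xb k j) ^ 2 + γ / 2 - 1 := by
    unfold Dobj
    simp only [one_mul, one_pow, Finset.sum_const, Finset.card_univ, Fintype.card_fin,
      nsmul_eq_mul, mul_one]
    have c1 : γ / (2 * (n : ℝ)) * (n : ℝ) = γ / 2 := by field_simp
    have c2 : (1 / (n : ℝ)) * (n : ℝ) = 1 := by field_simp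
    rw [c1, c2]
  -- norms of the candidate primal point
  have ew2 : ∑ j, ((1 / α) * softThresh β ((1 / (n : ℝ)) * ∑ k, xb k j)) ^ 2
      = (1 / α) ^ 2 * ∑ j, softThresh β ((1 / (n : ℝ)) * ∑ k, xb k j) ^ 2 := by
    rw [Finset.mul_sum]; apply Finset.sum_congr rfl; intro j _; ring
  have ew1 : ∑ j, |(1 / α) * softThresh β ((1 / (n : ℝ)) * ∑ k, xb k j)|
      = (1 / α) * ∑ j, |softThresh β ((1 / (n : ℝ)) * ∑ k, xb k j)| := by
    rw [Finset.mul_sum]; apply Finset.sum_congr rfl; intro j _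
    rw [abs_mul, abs_of_pos (by positivity : (0:ℝ) < 1 / α)]
  -- the key zero sum
  have hz : ∑ j, (softThresh β ((1 / (n : ℝ)) * ∑ k, xb k j) ^ 2
        + β * |softThresh β ((1 / (n : ℝ)) * ∑ k, xb k j)|
        - ((1 / (n : ℝ)) * ∑ k, xb k j) * softThresh β ((1 / (n : ℝ)) * ∑ k, xb k j)) = 0 :=
    Finset.sum_eq_zero fun j _ => by
      have := scalar_eq β ((1 / (n : ℝ)) * ∑ k, xb k j) hβ.le
      linarith
  have hz' : ∑ j, softThresh β ((1 / (n : ℝ)) * ∑ k, xb k j) ^ 2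
        + β * ∑ j, |softThresh β ((1 / (n : ℝ)) * ∑ k, xb k j)|
        - ∑ j, ((1 / (n : ℝ)) * ∑ k, xb k j) * softThresh β ((1 / (n : ℝ)) * ∑ k, xb k j) = 0 := by
    rw [← hz, Finset.sum_sub_distrib, Finset.sum_add_distrib, Finset.mul_sum]
  -- assemble
  unfold Pobj
  rw [hsum_ell, hD, ew2, ew1]
  set S2 := ∑ j, softThresh β ((1 / (n : ℝ)) * ∑ k, xb k j) ^ 2 with hS2
  set S1 := ∑ j, |softThresh β ((1 / (n : ℝ)) * ∑ k, xb k j)| with hS1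
  set Su := ∑ j, ((1 / (n : ℝ)) * ∑ k, xb k j) * softThresh β ((1 / (n : ℝ)) * ∑ k, xb k j) with hSu
  field_simp
  linear_combination 2 * hz'

theorem alpha_max_closed_form {n p : ℕ} (hn : 0 < n) (hp : 0 < p)
    (xb : Fin n → Fin p → ℝ) (γ : ℝ) (hγ0 : 0 < γ) (hγ1 : γ < 1)
    (α β : ℝ) (hα : 0 < α) (hβ : 0 < β)
    (hαmax : (1 / (1 - γ)) * Finset.univ.sup' ⟨(⟨0, hn⟩ : Fin n), Finset.mem_univ _⟩
      (fun i => ∑ j, xb i j * softThresh β ((1 / (n : ℝ)) * ∑ k, xb k j)) ≤ α) :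
    (∀ w, Pobj xb γ α β
        (fun j => (1 / α) * softThresh β ((1 / (n : ℝ)) * ∑ k, xb k j))
      ≤ Pobj xb γ α β w) ∧
    (∀ θ : Fin n → ℝ, (∀ i, 0 ≤ θ i ∧ θ i ≤ 1) →
      Dobj xb γ α β (fun _ => 1) ≤ Dobj xb γ α β θ) := by
  have hs := strong_eq hn xb γ hγ0 hγ1 α β hα hβ hαmax
  constructor
  · intro w
    have hw := weak_duality hn xb γ α β hγ0 hα hβ w (fun _ => 1)
      (fun i => ⟨zero_le_one, le_refl 1⟩)
    linarith
  · intro θ hθ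
    have hw := weak_duality hn xb γ α β hγ0 hα hβ
      (fun j => (1 / α) * softThresh β ((1 / (n : ℝ)) * ∑ k, xb k j)) θ hθ
    linarith
end

section
/- Dual optimum ball estimate without priors: let α₀ > 0, α > 0, β₀ > 0, and let θ*(α₀, β₀) minimize D(·; α₀, β₀) over the box [0,1]^n and θ*(α, β₀) minimize D(·; α, β₀) over [0,1]^n. Then ‖θ*(α, β₀) − ((α − α₀)/(2γα))·1 − ((α₀ + α)/(2α))·θ*(α₀, β₀)‖² ≤ ((α − α₀)²/(4α²))·‖θ*(α₀, β₀) − (1/γ)·1‖². -/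
open Finset

lemma st_sq (β : ℝ) (hβ : 0 ≤ β) (u : ℝ) : softThresh β u ^ 2 = max (|u| - β) 0 ^ 2 := by
  unfold softThresh
  rcases lt_trichotomy u 0 with h|h|h
  · rw [Real.sign_of_neg h]; ring
  · subst h
    rw [Real.sign_zero, abs_zero, max_eq_right (by linarith : (0:ℝ) - β ≤ 0)]
    ring
  · rw [Real.sign_of_pos h]; ring

lemma st_convex (β : ℝ) (hβ : 0 ≤ β) (a b t : ℝ) (ht0 : 0 ≤ t) (ht1 : t ≤ 1) :
    softThresh β ((1-t)*a + t*b)^2 ≤ (1-t)*softThresh β a^2 + t*softThresh β b^2 := by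
  rw [st_sq β hβ, st_sq β hβ, st_sq β hβ]
  set ua := max (|a| - β) 0 with hua_def
  set ub := max (|b| - β) 0 with hub_def
  set uc := max (|(1-t)*a+t*b| - β) 0 with huc_def
  have hua : 0 ≤ ua := le_max_right _ _
  have hub : 0 ≤ ub := le_max_right _ _
  have huc : 0 ≤ uc := le_max_right _ _
  have habs : |(1-t)*a + t*b| ≤ (1-t)*|a| + t*|b| := by
    calc |(1-t)*a+t*b| ≤ |(1-t)*a| + |t*b| := abs_add_le _ _
      _ = (1-t)*|a| + t*|b| := by
          rw [abs_mul, abs_mul, abs_of_nonneg (by linarith : (0:ℝ) ≤ 1-t), abs_of_nonneg ht0]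
  have h1 : uc ≤ (1-t)*ua + t*ub := by
    apply max_le
    · nlinarith [le_max_left (|a|-β) 0, le_max_left (|b|-β) 0]
    · nlinarith
  have h2 : uc^2 ≤ ((1-t)*ua + t*ub)^2 := by nlinarith
  nlinarith [mul_nonneg (mul_nonneg ht0 (sub_nonneg.mpr ht1)) (sq_nonneg (ua-ub))]

lemma strong_min {n p : ℕ} (hn : 0 < n) (xb : Fin n → Fin p → ℝ) (γ α' β : ℝ)
    (hγ : 0 < γ) (hα' : 0 < α') (hβ : 0 < β)
    (θs θ : Fin n → ℝ) (hbox2 : ∀ i, 0 ≤ θ i ∧ θ i ≤ 1)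
    (hbs : ∀ i, 0 ≤ θs i ∧ θs i ≤ 1)
    (hmin : ∀ η : Fin n → ℝ, (∀ i, 0 ≤ η i ∧ η i ≤ 1) →
      Dobj xb γ α' β θs ≤ Dobj xb γ α' β η) :
    Dobj xb γ α' β θs + (γ/(2*(n:ℝ))) * ∑ i, (θ i - θs i)^2 ≤ Dobj xb γ α' β θ := by
  have hnR : (0:ℝ) < (n:ℝ) := by exact_mod_cast hn
  set c : ℝ := (γ/(2*(n:ℝ))) * ∑ i, (θ i - θs i)^2 with hc_def
  have hc : 0 ≤ c := by positivity
  set K : ℝ := Dobj xb γ α' β θ - Dobj xb γ α' β θs with hK_def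
  have hKt : ∀ t : ℝ, 0 < t → t ≤ 1 → (1-t)*c ≤ K := by
    intro t ht0 ht1
    set θt : Fin n → ℝ := fun i => (1-t)*θs i + t*θ i with hθt_def
    have hfeas : ∀ i, 0 ≤ θt i ∧ θt i ≤ 1 := by
      intro i
      obtain ⟨h1, h2⟩ := hbs i; obtain ⟨h3, h4⟩ := hbox2 i
      constructor
      · have := mul_nonneg (by linarith : (0:ℝ) ≤ 1-t) h1
        have := mul_nonneg ht0.le h3
        simp only [hθt_def]; linarith
      · simp only [hθt_def]; nlinarith
    have hDm := hmin θt hfeas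
    -- linear maps
    have hLj : ∀ j, (1/(n:ℝ)) * ∑ i, θt i * xb i j
        = (1-t)*((1/(n:ℝ))*∑ i, θs i * xb i j) + t*((1/(n:ℝ))*∑ i, θ i * xb i j) := by
      intro j
      have : ∑ i, θt i * xb i j = (1-t)*(∑ i, θs i * xb i j) + t*(∑ i, θ i * xb i j) := by
        rw [Finset.mul_sum, Finset.mul_sum, ← Finset.sum_add_distrib]
        exact Finset.sum_congr rfl fun i _ => by simp only [hθt_def]; ring
      rw [this]; ring
    have hF : ∑ j, softThresh β ((1/(n:ℝ)) * ∑ i, θt i * xb i j) ^ 2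
        ≤ (1-t) * ∑ j, softThresh β ((1/(n:ℝ)) * ∑ i, θs i * xb i j) ^ 2
          + t * ∑ j, softThresh β ((1/(n:ℝ)) * ∑ i, θ i * xb i j) ^ 2 := by
      rw [Finset.mul_sum, Finset.mul_sum, ← Finset.sum_add_distrib]
      apply Finset.sum_le_sum
      intro j _
      rw [hLj j]
      exact st_convex β hβ.le _ _ t ht0.le ht1
    have hQ : ∑ i, θt i ^ 2
        = (1-t) * ∑ i, θs i ^ 2 + t * ∑ i, θ i ^ 2
          - t*(1-t) * ∑ i, (θ i - θs i)^2 := by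
      rw [Finset.mul_sum, Finset.mul_sum, Finset.mul_sum, ← Finset.sum_add_distrib,
        ← Finset.sum_sub_distrib]
      all_goals exact Finset.sum_congr rfl fun i _ => by simp only [hθt_def]; try ring
    have hE : ∑ i, θt i = (1-t) * ∑ i, θs i + t * ∑ i, θ i := by
      rw [Finset.mul_sum, Finset.mul_sum, ← Finset.sum_add_distrib]
      all_goals exact Finset.sum_congr rfl fun i _ => by simp only [hθt_def]; try ring
    have hDt : Dobj xb γ α' β θt
        ≤ (1-t) * Dobj xb γ α' β θs + t * Dobj xb γ α' β θ - t*(1-t)*c := by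
      simp only [Dobj, hQ, hE, hc_def]
      have h2α : (0:ℝ) < 1/(2*α') := by positivity
      nlinarith [mul_le_mul_of_nonneg_left hF h2α.le]
    have : t * ((1-t)*c) ≤ t * K := by
      simp only [hK_def]; nlinarith
    exact le_of_mul_le_mul_left this ht0
  refine le_of_forall_pos_le_add ?_
  intro ε hε
  have hc1 : (0:ℝ) < c + 1 := by linarith
  set t : ℝ := min 1 (ε/(c+1)) with ht_def
  have ht0 : 0 < t := lt_min one_pos (div_pos hε hc1)
  have ht1 : t ≤ 1 := min_le_left _ _
  have h := hKt t ht0 ht1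
  have htc : t * c ≤ ε := by
    have h1 : t ≤ ε/(c+1) := min_le_right _ _
    have : t * c ≤ (ε/(c+1)) * c := mul_le_mul_of_nonneg_right h1 hc
    have h2 : (ε/(c+1)) * c ≤ ε := by
      rw [div_mul_eq_mul_div, div_le_iff₀ hc1]; nlinarith
    linarith
  have : c ≤ K + t*c := by nlinarith
  simp only [hK_def] at this ⊢
  linarith

theorem dual_ball_estimate {n p : ℕ} (hn : 0 < n) (hp : 0 < p)
    (xb : Fin n → Fin p → ℝ) (γ : ℝ) (hγ0 : 0 < γ) (hγ1 : γ < 1)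
    (α₀ α β₀ : ℝ) (hα₀ : 0 < α₀) (hα : 0 < α) (hβ₀ : 0 < β₀)
    (θ0 θa : Fin n → ℝ)
    (hθ0box : ∀ i, 0 ≤ θ0 i ∧ θ0 i ≤ 1)
    (hθ0 : ∀ θ : Fin n → ℝ, (∀ i, 0 ≤ θ i ∧ θ i ≤ 1) →
      Dobj xb γ α₀ β₀ θ0 ≤ Dobj xb γ α₀ β₀ θ)
    (hθabox : ∀ i, 0 ≤ θa i ∧ θa i ≤ 1)
    (hθa : ∀ θ : Fin n → ℝ, (∀ i, 0 ≤ θ i ∧ θ i ≤ 1) →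
      Dobj xb γ α β₀ θa ≤ Dobj xb γ α β₀ θ) :
    ∑ i, (θa i - (α - α₀) / (2 * γ * α) - ((α₀ + α) / (2 * α)) * θ0 i) ^ 2
      ≤ ((α - α₀) ^ 2 / (4 * α ^ 2)) * ∑ i, (θ0 i - 1 / γ) ^ 2 := by
  have hnR : (0:ℝ) < (n:ℝ) := by exact_mod_cast hn
  set F0 : ℝ := ∑ j, softThresh β₀ ((1/(n:ℝ)) * ∑ i, θ0 i * xb i j) ^ 2 with hF0
  set Fa : ℝ := ∑ j, softThresh β₀ ((1/(n:ℝ)) * ∑ i, θa i * xb i j) ^ 2 with hFa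
  set Q0 : ℝ := ∑ i, θ0 i ^ 2 with hQ0
  set Qa : ℝ := ∑ i, θa i ^ 2 with hQa
  set E0 : ℝ := ∑ i, θ0 i with hE0
  set Ea : ℝ := ∑ i, θa i with hEa
  set A : ℝ := ∑ i, (θ0 i - θa i)^2 with hA
  have hAsym : ∑ i, (θa i - θ0 i)^2 = A := Finset.sum_congr rfl fun i _ => by ring
  have hS1 := strong_min hn xb γ α₀ β₀ hγ0 hα₀ hβ₀ θ0 θa hθabox hθ0box hθ0
  have hS2 := strong_min hn xb γ α β₀ hγ0 hα hβ₀ θa θ0 hθ0box hθabox hθa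
  rw [hAsym] at hS1
  simp only [Dobj, ← hF0, ← hFa, ← hQ0, ← hQa, ← hE0, ← hEa, ← hA] at hS1 hS2
  -- hS1 : (1/(2α₀))F0 + (γ/2n)Q0 - (1/n)E0 + (γ/2n)A ≤ (1/(2α₀))Fa + (γ/2n)Qa - (1/n)Ea
  -- hS2 : (1/(2α))Fa + (γ/2n)Qa - (1/n)Ea + (γ/2n)A ≤ (1/(2α))F0 + (γ/2n)Q0 - (1/n)E0
  set w : ℝ := (γ/(2*(n:ℝ))) * A with hw
  set qd : ℝ := (γ/(2*(n:ℝ))) * (Q0 - Qa) - (1/(n:ℝ)) * (E0 - Ea) with hqd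
  have hu1 : Fa - F0 ≤ 2*α*(qd - w) := by
    have step : (1/(2*α))*Fa - (1/(2*α))*F0 ≤ qd - w := by
      simp only [hqd, hw]; linarith
    calc Fa - F0 = 2*α*((1/(2*α))*Fa - (1/(2*α))*F0) := by field_simp
      _ ≤ 2*α*(qd - w) := by
          apply mul_le_mul_of_nonneg_left step (by positivity)
  have hu2 : 2*α₀*(qd + w) ≤ Fa - F0 := by
    have step : qd + w ≤ (1/(2*α₀))*Fa - (1/(2*α₀))*F0 := by
      simp only [hqd, hw]; linarith
    calc 2*α₀*(qd + w) ≤ 2*α₀*((1/(2*α₀))*Fa - (1/(2*α₀))*F0) :=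
          mul_le_mul_of_nonneg_left step (by positivity)
      _ = Fa - F0 := by field_simp
  have hkey : (α+α₀)*w ≤ (α-α₀)*qd := by nlinarith
  -- convert to sum form: (α+α₀)*(γ/2n)*A ≤ (α-α₀)*((γ/2n)(Q0-Qa) - (1/n)(E0-Ea))
  -- multiply by 2n/γ > 0 :
  have hkey2 : (α+α₀)*A ≤ (α-α₀)*((Q0-Qa) - (2/γ)*(E0-Ea)) := by
    have h2nγ : (0:ℝ) < γ/(2*(n:ℝ)) := by positivity
    have := mul_le_mul_of_nonneg_left hkey (le_of_lt (by positivity : (0:ℝ) < 2*(n:ℝ)/γ))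
    simp only [hw, hqd] at this
    calc (α+α₀)*A = (2*(n:ℝ)/γ) * ((α+α₀)*(γ/(2*(n:ℝ))*A)) := by field_simp
      _ ≤ (2*(n:ℝ)/γ) * ((α-α₀)*(γ/(2*(n:ℝ))*(Q0-Qa) - 1/(n:ℝ)*(E0-Ea))) := this
      _ = (α-α₀)*((Q0-Qa) - (2/γ)*(E0-Ea)) := by field_simp
  -- final algebraic identity
  have expand : ∑ i, (θa i - (α - α₀) / (2 * γ * α) - ((α₀ + α) / (2 * α)) * θ0 i) ^ 2
      = ((α - α₀) ^ 2 / (4 * α ^ 2)) * ∑ i, (θ0 i - 1 / γ) ^ 2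
        + (1/(2*α)) * ∑ i, ((α+α₀)*(θ0 i - θa i)^2
            - (α-α₀)*(θ0 i^2 - θa i^2 - (2/γ)*(θ0 i - θa i))) := by
    rw [Finset.mul_sum, Finset.mul_sum, ← Finset.sum_add_distrib]
    all_goals exact Finset.sum_congr rfl fun i _ => by field_simp; ring
  have hsumI : ∑ i, ((α+α₀)*(θ0 i - θa i)^2
      - (α-α₀)*(θ0 i^2 - θa i^2 - (2/γ)*(θ0 i - θa i)))
      = (α+α₀)*A - (α-α₀)*((Q0-Qa) - (2/γ)*(E0-Ea)) := by
    have hsum2 : ∑ i, (θ0 i^2 - θa i^2 - (2/γ)*(θ0 i - θa i))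
        = (Q0-Qa) - (2/γ)*(E0-Ea) := by
      rw [Finset.sum_sub_distrib, Finset.sum_sub_distrib, ← Finset.mul_sum,
        Finset.sum_sub_distrib]
    rw [Finset.sum_sub_distrib, ← Finset.mul_sum, ← Finset.mul_sum, hsum2]
  rw [expand, hsumI]
  have hfin : (1/(2*α)) * ((α+α₀)*A - (α-α₀)*((Q0-Qa) - (2/γ)*(E0-Ea))) ≤ 0 := by
    apply mul_nonpos_of_nonneg_of_nonpos (by positivity)
    linarith
  linarith
end
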